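/- arXiv:1802.05451 — 6 statements merged into one kernel-verified Lean document; each statement's English description precedes it below -/
import Mathlib

section
/- Let F be a graph labeling function on n nodes such that there exist functions φ : ℝ^d × ℝ^e × ℝ^d → ℝ^L, α : ℝ^d × ℝ^L → ℝ^W, and ρ : ℝ^d × ℝ^W → Y with [F(z)]_k = ρ(z_k, Σ_{i=1}^n α(z_i, Σ_{j≠i} φ(z_i, z_{i,j}, z_j))) for every input z and every k ∈ {1,…,n}. Then F is graph-permutation invariant, i.e., F(σ(z)) = σ(F(z)) for every permutation σ of {1,…,n} and every input z. -/
/-- An input to a graph labeling function on `n` nodes: node features in `ℝ^d`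
and edge features in `ℝ^e` for each ordered pair of nodes. -/
structure GraphInput (n d e : ℕ) where
  node : Fin n → (Fin d → ℝ)
  edge : Fin n → Fin n → (Fin e → ℝ)

/-- The action of a permutation `σ` on an input: `[σ(z)]_i = z_{σ(i)}` and
`[σ(z)]_{i,j} = z_{σ(i),σ(j)}`. -/
def GraphInput.perm {n d e : ℕ} (σ : Equiv.Perm (Fin n)) (z : GraphInput n d e) :
    GraphInput n d e :=
  ⟨fun i => z.node (σ i), fun i j => z.edge (σ i) (σ j)⟩

/-- `F` is graph-permutation invariant: `F(σ(z)) = σ(F(z))` for all `σ`, `z`. -/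
def IsGPI {n d e : ℕ} {Y : Type*} (F : GraphInput n d e → Fin n → Y) : Prop :=
  ∀ (σ : Equiv.Perm (Fin n)) (z : GraphInput n d e),
    F (z.perm σ) = fun k => F z (σ k)

/-- If `F` has the form
`[F(z)]_k = ρ(z_k, Σ_i α(z_i, Σ_{j≠i} φ(z_i, z_{i,j}, z_j)))`
for some functions `φ, α, ρ`, then `F` is graph-permutation invariant. -/
theorem gpi_of_decomposition {n d e L W : ℕ} {Y : Type*}
    (hn : 1 ≤ n) (hd : 1 ≤ d) (he : 1 ≤ e)
    (F : GraphInput n d e → Fin n → Y)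
    (φ : (Fin d → ℝ) → (Fin e → ℝ) → (Fin d → ℝ) → (Fin L → ℝ))
    (α : (Fin d → ℝ) → (Fin L → ℝ) → (Fin W → ℝ))
    (ρ : (Fin d → ℝ) → (Fin W → ℝ) → Y)
    (hF : ∀ (z : GraphInput n d e) (k : Fin n),
      F z k = ρ (z.node k)
        (∑ i : Fin n, α (z.node i)
          (∑ j ∈ ({i}ᶜ : Finset (Fin n)), φ (z.node i) (z.edge i j) (z.node j)))) :
    IsGPI F := by
  intro σ z
  funext k
  rw [hF, hF]
  simp only [GraphInput.perm]
  have hinner : ∀ i : Fin n,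
      (∑ j ∈ ({i}ᶜ : Finset (Fin n)), φ (z.node (σ i)) (z.edge (σ i) (σ j)) (z.node (σ j)))
        = ∑ j ∈ ({σ i}ᶜ : Finset (Fin n)), φ (z.node (σ i)) (z.edge (σ i) j) (z.node j) := by
    intro i
    refine Finset.sum_equiv σ (fun j => ?_) (fun j _ => rfl)
    simp [Equiv.apply_eq_iff_eq]
  have houter :
      (∑ i : Fin n, α (z.node (σ i))
        (∑ j ∈ ({i}ᶜ : Finset (Fin n)), φ (z.node (σ i)) (z.edge (σ i) (σ j)) (z.node (σ j))))
      = ∑ i : Fin n, α (z.node i)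
        (∑ j ∈ ({i}ᶜ : Finset (Fin n)), φ (z.node i) (z.edge i j) (z.node j)) := by
    simp only [hinner]
    exact Fintype.sum_equiv σ _ _ fun i => rfl
  rw [houter]
end

section
/- Let e = 1, let Y be a set, and let F₀ be a graph-permutation invariant graph labeling function on n nodes with labels in Y whose output depends only on the edge features (i.e., F₀(z) = F₀(z') whenever z and z' have identical edge features z_{i,j} = z'_{i,j} for all i ≠ j). Let D ⊆ ℝ^d be a finite set. Then there exist L, W ∈ ℕ and functions φ : ℝ^d × ℝ × ℝ^d → ℝ^L, α : ℝ^d × ℝ^L → ℝ^W, and ρ : ℝ^d × ℝ^W → Y such that for every input z whose node features z_1, …, z_n are pairwise distinct elements of D and for every k ∈ {1,…,n}, [F₀(z)]_k = ρ(z_k, Σ_{i=1}^n α(z_i, Σ_{j≠i} φ(z_i, z_{i,j}, z_j))). -/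
/-- An input to a graph labeling function on `n` nodes with node features in `ℝ^d`
and scalar edge features (the case `e = 1`). -/
structure GraphInput1 (n d : ℕ) where
  node : Fin n → (Fin d → ℝ)
  edge : Fin n → Fin n → ℝ

/-- The action of a permutation `σ` on an input: `[σ(z)]_i = z_{σ(i)}` and
`[σ(z)]_{i,j} = z_{σ(i),σ(j)}`. -/
def GraphInput1.perm {n d : ℕ} (σ : Equiv.Perm (Fin n)) (z : GraphInput1 n d) :
    GraphInput1 n d :=
  ⟨fun i => z.node (σ i), fun i j => z.edge (σ i) (σ j)⟩

noncomputable section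

open Finset

variable {n d : ℕ}

noncomputable def gidx (D : Finset (Fin d → ℝ)) (x : Fin d → ℝ) : ℕ :=
  if h : x ∈ D then (D.equivFin ⟨x, h⟩ : ℕ) else D.card

lemma gidx_lt {D : Finset (Fin d → ℝ)} {x : Fin d → ℝ} (hx : x ∈ D) :
    gidx D x < D.card := by
  simp only [gidx, dif_pos hx]
  exact (D.equivFin ⟨x, hx⟩).isLt

lemma gidx_inj {D : Finset (Fin d → ℝ)} {x y : Fin d → ℝ} (hx : x ∈ D) (hy : y ∈ D)
    (h : gidx D x = gidx D y) : x = y := by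
  simp only [gidx, dif_pos hx, dif_pos hy] at h
  have := D.equivFin.injective (Fin.val_injective h)
  exact congrArg Subtype.val this

noncomputable def gphi (D : Finset (Fin d → ℝ)) (x : Fin d → ℝ) (c : ℝ) (y : Fin d → ℝ) :
    Fin D.card → ℝ :=
  fun t => if gidx D y = (t : ℕ) then c else 0

noncomputable def galpha (D : Finset (Fin d → ℝ)) (x : Fin d → ℝ) (v : Fin D.card → ℝ) :
    Fin (D.card * (D.card + 1)) → ℝ :=
  fun w => if (w : ℕ) / (D.card + 1) = gidx D x then
      (if h : (w : ℕ) % (D.card + 1) < D.card then v ⟨(w : ℕ) % (D.card + 1), h⟩ else 1)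
    else 0

noncomputable def gagg (D : Finset (Fin d → ℝ)) (z : GraphInput1 n d) :
    Fin (D.card * (D.card + 1)) → ℝ :=
  ∑ i : Fin n, galpha D (z.node i)
    (∑ j ∈ ({i}ᶜ : Finset (Fin n)), gphi D (z.node i) (z.edge i j) (z.node j))

def wOf (D : Finset (Fin d → ℝ)) (s r : ℕ) (hs : s < D.card) (hr : r < D.card + 1) :
    Fin (D.card * (D.card + 1)) :=
  ⟨s * (D.card + 1) + r, by
    calc s * (D.card + 1) + r < s * (D.card + 1) + (D.card + 1) := by omega
      _ = (s + 1) * (D.card + 1) := by ring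
      _ ≤ D.card * (D.card + 1) := Nat.mul_le_mul_right _ hs⟩

@[simp] lemma wOf_val (D : Finset (Fin d → ℝ)) (s r : ℕ) (hs : s < D.card)
    (hr : r < D.card + 1) : (wOf D s r hs hr : ℕ) = s * (D.card + 1) + r := rfl

lemma wOf_div (D : Finset (Fin d → ℝ)) (s r : ℕ) (hs : s < D.card) (hr : r < D.card + 1) :
    (wOf D s r hs hr : ℕ) / (D.card + 1) = s := by
  rw [wOf_val, add_comm, Nat.add_mul_div_right _ _ (Nat.succ_pos _), Nat.div_eq_of_lt hr,
    zero_add]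

lemma wOf_mod (D : Finset (Fin d → ℝ)) (s r : ℕ) (hs : s < D.card) (hr : r < D.card + 1) :
    (wOf D s r hs hr : ℕ) % (D.card + 1) = r := by
  rw [wOf_val, add_comm, Nat.add_mul_mod_self_right, Nat.mod_eq_of_lt hr]

lemma gagg_apply (D : Finset (Fin d → ℝ)) {z : GraphInput1 n d}
    (hm : ∀ i, z.node i ∈ D) (hi : Function.Injective z.node)
    (i₀ : Fin n) {s r : ℕ} (hs : s < D.card) (hr : r < D.card + 1)
    (hsi : gidx D (z.node i₀) = s) :
    gagg D z (wOf D s r hs hr) =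
      if h : r < D.card then
        ∑ j ∈ ({i₀}ᶜ : Finset (Fin n)),
          (if gidx D (z.node j) = r then z.edge i₀ j else 0)
      else 1 := by
  rw [gagg, Finset.sum_apply]
  rw [Finset.sum_eq_single_of_mem i₀ (Finset.mem_univ _)]
  · rw [galpha]
    rw [if_pos (by rw [wOf_div]; exact hsi.symm)]
    rw [wOf_mod]
    split
    · rw [Finset.sum_apply]
      exact Finset.sum_congr rfl fun j _ => rfl
    · rfl
  · intro b _ hb
    rw [galpha, if_neg]
    intro hcontra
    rw [wOf_div] at hcontra
    exact hb (hi (gidx_inj (hm b) (hm i₀) (hcontra.symm.trans hsi.symm)))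

lemma gagg_apply_zero (D : Finset (Fin d → ℝ)) {z : GraphInput1 n d}
    {s r : ℕ} (hs : s < D.card) (hr : r < D.card + 1)
    (habs : ∀ i, gidx D (z.node i) ≠ s) :
    gagg D z (wOf D s r hs hr) = 0 := by
  rw [gagg, Finset.sum_apply]
  refine Finset.sum_eq_zero fun i _ => ?_
  rw [galpha, if_neg]
  intro hcontra
  rw [wOf_div] at hcontra
  exact habs i hcontra.symm

lemma gagg_ind (D : Finset (Fin d → ℝ)) {z : GraphInput1 n d}
    (hm : ∀ i, z.node i ∈ D) (hi : Function.Injective z.node)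
    {x : Fin d → ℝ} (hx : x ∈ D) {s : ℕ} (hs : s < D.card) (hsx : gidx D x = s) :
    gagg D z (wOf D s D.card hs (Nat.lt_succ_self _)) =
      if ∃ i, z.node i = x then 1 else 0 := by
  by_cases hpres : ∃ i, z.node i = x
  · obtain ⟨i₀, hi₀⟩ := hpres
    rw [gagg_apply D hm hi i₀ hs (Nat.lt_succ_self _) (by rw [hi₀]; exact hsx)]
    rw [dif_neg (lt_irrefl _), if_pos ⟨i₀, hi₀⟩]
  · rw [gagg_apply_zero D hs (Nat.lt_succ_self _), if_neg hpres]
    intro i hcon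
    exact hpres ⟨i, gidx_inj (hm i) hx (hcon.trans hsx.symm)⟩

lemma gagg_edge (D : Finset (Fin d → ℝ)) {z : GraphInput1 n d}
    (hm : ∀ i, z.node i ∈ D) (hi : Function.Injective z.node)
    {i j : Fin n} (hij : i ≠ j) {s r : ℕ} (hs : s < D.card) (hr : r < D.card + 1)
    (hsi : gidx D (z.node i) = s) (hrj : gidx D (z.node j) = r) :
    gagg D z (wOf D s r hs hr) = z.edge i j := by
  have hrm : r < D.card := hrj ▸ gidx_lt (hm j)
  rw [gagg_apply D hm hi i hs hr hsi, dif_pos hrm]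
  rw [Finset.sum_eq_single_of_mem j (by simp [Finset.mem_compl, hij.symm])]
  · rw [if_pos hrj]
  · intro b hb hbj
    rw [if_neg]
    intro hcon
    exact hbj (hi (gidx_inj (hm b) (hm j) (hcon.trans hrj.symm)))

end

/-- If `F₀` is graph-permutation invariant and depends only on the
edge features, and `D ⊆ ℝ^d` is finite, then there exist `L`, `W` and functions
`φ : ℝ^d × ℝ × ℝ^d → ℝ^L`, `α : ℝ^d × ℝ^L → ℝ^W`, `ρ : ℝ^d × ℝ^W → Y` such that
on every input whose node features are pairwise distinct elements of `D`,
`[F₀(z)]_k = ρ(z_k, Σ_i α(z_i, Σ_{j≠i} φ(z_i, z_{i,j}, z_j)))` for all `k`. -/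
theorem gpi_decomposition_exists {n d : ℕ} {Y : Type*}
    (hn : 1 ≤ n) (hd : 1 ≤ d)
    (F₀ : GraphInput1 n d → Fin n → Y)
    (hGPI : ∀ (σ : Equiv.Perm (Fin n)) (z : GraphInput1 n d),
      F₀ (z.perm σ) = fun k => F₀ z (σ k))
    (hEdgeOnly : ∀ z z' : GraphInput1 n d,
      (∀ i j : Fin n, i ≠ j → z.edge i j = z'.edge i j) → F₀ z = F₀ z')
    (D : Finset (Fin d → ℝ)) :
    ∃ (L W : ℕ)
      (φ : (Fin d → ℝ) → ℝ → (Fin d → ℝ) → (Fin L → ℝ))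
      (α : (Fin d → ℝ) → (Fin L → ℝ) → (Fin W → ℝ))
      (ρ : (Fin d → ℝ) → (Fin W → ℝ) → Y),
      ∀ z : GraphInput1 n d,
        (∀ i : Fin n, z.node i ∈ D) → Function.Injective z.node →
        ∀ k : Fin n,
          F₀ z k = ρ (z.node k)
            (∑ i : Fin n, α (z.node i)
              (∑ j ∈ ({i}ᶜ : Finset (Fin n)),
                φ (z.node i) (z.edge i j) (z.node j))) := by
  classical
  -- the key well-definedness lemma
  have key : ∀ z z' : GraphInput1 n d, (∀ i, z.node i ∈ D) → Function.Injective z.node →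
      (∀ i, z'.node i ∈ D) → Function.Injective z'.node →
      gagg D z = gagg D z' → ∀ k k' : Fin n, z.node k = z'.node k' →
      F₀ z k = F₀ z' k' := by
    intro z z' hm hi hm' hi' hagg k k' hk
    have hrange : ∀ a, ∃ b, z.node b = z'.node a := by
      intro a
      by_contra hcon
      push_neg at hcon
      have h1 := gagg_ind D hm hi (hm' a) (gidx_lt (hm' a)) rfl
      have h2 := gagg_ind D hm' hi' (hm' a) (gidx_lt (hm' a)) rfl
      rw [hagg] at h1
      have h3 := h1.symm.trans h2
      rw [if_neg (by intro ⟨i, hi2⟩; exact hcon i hi2), if_pos ⟨a, rfl⟩] at h3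
      norm_num at h3
    choose f hf using hrange
    have hfinj : Function.Injective f := by
      intro a b hab
      apply hi'
      rw [← hf a, ← hf b, hab]
    let σ : Equiv.Perm (Fin n) := Equiv.ofBijective f (Finite.injective_iff_bijective.mp hfinj)
    have hσ : ∀ a, z.node (σ a) = z'.node a := fun a => hf a
    have hE : F₀ (z.perm σ) = F₀ z' := by
      apply hEdgeOnly
      intro a b hab
      show z.edge (σ a) (σ b) = z'.edge a b
      have hσab : σ a ≠ σ b := fun h => hab (σ.injective h)
      have h1 := gagg_edge D hm hi hσab (gidx_lt (hm (σ a))) (Nat.lt_succ_of_lt (gidx_lt (hm (σ b)))) rfl rfl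
      have h2 := gagg_edge D hm' hi' hab
        (s := gidx D (z.node (σ a))) (r := gidx D (z.node (σ b)))
        (gidx_lt (hm (σ a))) (Nat.lt_succ_of_lt (gidx_lt (hm (σ b))))
        (by rw [hσ a]) (by rw [hσ b])
      rw [hagg] at h1
      exact h1.symm.trans h2
    have hσk : σ k' = k := hi ((hσ k').trans hk.symm)
    calc F₀ z k = F₀ z (σ k') := by rw [hσk]
      _ = F₀ (z.perm σ) k' := by rw [hGPI σ z]
      _ = F₀ z' k' := by rw [hE]
  refine ⟨D.card, D.card * (D.card + 1), gphi D, galpha D,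
    fun x S => if h : ∃ p : GraphInput1 n d × Fin n,
        (∀ i, p.1.node i ∈ D) ∧ Function.Injective p.1.node ∧
        p.1.node p.2 = x ∧ gagg D p.1 = S
      then F₀ h.choose.1 h.choose.2
      else F₀ ⟨fun _ _ => 0, fun _ _ => 0⟩ ⟨0, hn⟩, ?_⟩
  intro z hmem hinj k
  have hex : ∃ p : GraphInput1 n d × Fin n,
      (∀ i, p.1.node i ∈ D) ∧ Function.Injective p.1.node ∧
      p.1.node p.2 = z.node k ∧ gagg D p.1 =
        (∑ i : Fin n, galpha D (z.node i)
          (∑ j ∈ ({i}ᶜ : Finset (Fin n)), gphi D (z.node i) (z.edge i j) (z.node j))) :=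
    ⟨⟨z, k⟩, hmem, hinj, rfl, rfl⟩
  beta_reduce
  rw [dif_pos hex]
  obtain ⟨h1, h2, h3, h4⟩ := hex.choose_spec
  exact (key _ _ h1 h2 hmem hinj h4 _ _ h3).symm
end

section
/- Let e = 1, let Y be a set, let D ⊆ ℝ^d be a finite set, and let F₀ be a graph labeling function on n nodes, with labels in Y, whose output depends only on the edge features, restricted to inputs whose node features are pairwise distinct elements of D. Then F₀ is graph-permutation invariant on such inputs if and only if there exist L, W ∈ ℕ and functions φ : ℝ^d × ℝ × ℝ^d → ℝ^L, α : ℝ^d × ℝ^L → ℝ^W, and ρ : ℝ^d × ℝ^W → Y such that for every such input z and every k ∈ {1,…,n}, [F₀(z)]_k = ρ(z_k, Σ_{i=1}^n α(z_i, Σ_{j≠i} φ(z_i, z_{i,j}, z_j))). -/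
namespace GPIAux

/-- Index of a feature vector in `D` (junk value `Fin.last` outside `D`). -/
noncomputable def idxD {d : ℕ} (D : Finset (Fin d → ℝ)) (x : Fin d → ℝ) : Fin (D.card + 1) :=
  if h : x ∈ D then (D.equivFin ⟨x, h⟩).castSucc else Fin.last D.card

lemma idxD_inj {d : ℕ} (D : Finset (Fin d → ℝ)) {x y : Fin d → ℝ}
    (hx : x ∈ D) (hy : y ∈ D) (h : idxD D x = idxD D y) : x = y := by
  simp only [idxD, dif_pos hx, dif_pos hy, Fin.castSucc_inj] at h
  exact congrArg Subtype.val (D.equivFin.injective h)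

/-- Encoding of a pair of indices and a tag into a single index. -/
def enc {M : ℕ} (a b : Fin M) (t : Fin 2) : Fin (M * (M * 2)) :=
  finProdFinEquiv (a, finProdFinEquiv (b, t))

lemma enc_inj {M : ℕ} {a a' b b' : Fin M} {t t' : Fin 2}
    (h : enc a b t = enc a' b' t') : a = a' ∧ b = b' ∧ t = t' := by
  unfold enc at h
  have h1 := finProdFinEquiv.injective h
  have ha := congrArg Prod.fst h1
  have h2 := finProdFinEquiv.injective (congrArg Prod.snd h1)
  exact ⟨ha, congrArg Prod.fst h2, congrArg Prod.snd h2⟩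

/-- The edge-encoding function `φ`. -/
noncomputable def φD {d : ℕ} (D : Finset (Fin d → ℝ)) (x : Fin d → ℝ) (e : ℝ) (y : Fin d → ℝ) :
    Fin ((D.card + 1) * ((D.card + 1) * 2)) → ℝ :=
  fun c => if c = enc (idxD D x) (idxD D y) 0 then 1
    else if c = enc (idxD D x) (idxD D y) 1 then e else 0

lemma φD_ind {d : ℕ} (D : Finset (Fin d → ℝ)) (x : Fin d → ℝ) (e : ℝ) (y : Fin d → ℝ)
    (a b : Fin (D.card + 1)) :
    φD D x e y (enc a b 0) = if idxD D x = a ∧ idxD D y = b then 1 else 0 := by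
  unfold φD
  by_cases h : idxD D x = a ∧ idxD D y = b
  · rw [if_pos h, if_pos]
    rw [h.1, h.2]
  · rw [if_neg h, if_neg, if_neg]
    · intro hc
      obtain ⟨h1, h2, h3⟩ := enc_inj hc
      exact absurd h3 (by decide)
    · intro hc
      obtain ⟨h1, h2, -⟩ := enc_inj hc
      exact h ⟨h1.symm, h2.symm⟩

lemma φD_val {d : ℕ} (D : Finset (Fin d → ℝ)) (x : Fin d → ℝ) (e : ℝ) (y : Fin d → ℝ)
    (a b : Fin (D.card + 1)) :
    φD D x e y (enc a b 1) = if idxD D x = a ∧ idxD D y = b then e else 0 := by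
  unfold φD
  by_cases h : idxD D x = a ∧ idxD D y = b
  · rw [if_pos h, if_neg, if_pos]
    · rw [h.1, h.2]
    · intro hc
      obtain ⟨-, -, h3⟩ := enc_inj hc
      exact absurd h3 (by decide)
  · rw [if_neg h, if_neg, if_neg]
    · intro hc
      obtain ⟨h1, h2, -⟩ := enc_inj hc
      exact h ⟨h1.symm, h2.symm⟩
    · intro hc
      obtain ⟨-, -, h3⟩ := enc_inj hc
      exact absurd h3 (by decide)

/-- The full encoding of an input. -/
noncomputable def encInput {n d : ℕ} (D : Finset (Fin d → ℝ)) (z : GraphInput1 n d) :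
    Fin ((D.card + 1) * ((D.card + 1) * 2)) → ℝ :=
  ∑ i : Fin n, ∑ j ∈ ({i}ᶜ : Finset (Fin n)), φD D (z.node i) (z.edge i j) (z.node j)

lemma encInput_ind {n d : ℕ} (D : Finset (Fin d → ℝ)) (z : GraphInput1 n d)
    (a b : Fin (D.card + 1)) :
    encInput D z (enc a b 0) =
      ∑ i : Fin n, ∑ j ∈ ({i}ᶜ : Finset (Fin n)),
        (if idxD D (z.node i) = a ∧ idxD D (z.node j) = b then (1 : ℝ) else 0) := by
  simp only [encInput, Finset.sum_apply, φD_ind]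

lemma encInput_val_eq {n d : ℕ} (D : Finset (Fin d → ℝ)) (z : GraphInput1 n d)
    (a b : Fin (D.card + 1)) :
    encInput D z (enc a b 1) =
      ∑ i : Fin n, ∑ j ∈ ({i}ᶜ : Finset (Fin n)),
        (if idxD D (z.node i) = a ∧ idxD D (z.node j) = b then z.edge i j else 0) := by
  simp only [encInput, Finset.sum_apply, φD_val]

lemma ind_pos {n d : ℕ} (D : Finset (Fin d → ℝ)) (z : GraphInput1 n d)
    {p q : Fin n} (hpq : p ≠ q) :
    encInput D z (enc (idxD D (z.node p)) (idxD D (z.node q)) 0) ≠ 0 := by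
  rw [encInput_ind]
  intro h0
  have hnn : ∀ i ∈ (Finset.univ : Finset (Fin n)),
      (0:ℝ) ≤ ∑ j ∈ ({i}ᶜ : Finset (Fin n)),
        (if idxD D (z.node i) = idxD D (z.node p) ∧ idxD D (z.node j) = idxD D (z.node q)
          then (1 : ℝ) else 0) := by
    intro i _
    apply Finset.sum_nonneg
    intro j _
    positivity
  have h1 := (Finset.sum_eq_zero_iff_of_nonneg hnn).mp h0 p (Finset.mem_univ p)
  have hnn2 : ∀ j ∈ ({p}ᶜ : Finset (Fin n)),
      (0:ℝ) ≤ (if idxD D (z.node p) = idxD D (z.node p) ∧ idxD D (z.node j) = idxD D (z.node q)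
        then (1 : ℝ) else 0) := by
    intro j _; positivity
  have h2 := (Finset.sum_eq_zero_iff_of_nonneg hnn2).mp h1 q (by simpa using hpq.symm)
  simp at h2

lemma exists_of_ind_ne_zero {n d : ℕ} (D : Finset (Fin d → ℝ)) (z : GraphInput1 n d)
    {a b : Fin (D.card + 1)}
    (h : encInput D z (enc a b 0) ≠ 0) :
    ∃ p q : Fin n, p ≠ q ∧ idxD D (z.node p) = a ∧ idxD D (z.node q) = b := by
  by_contra hc
  push_neg at hc
  apply h
  rw [encInput_ind]
  apply Finset.sum_eq_zero
  intro i _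
  apply Finset.sum_eq_zero
  intro j hj
  apply if_neg
  rintro ⟨h1, h2⟩
  exact hc i j (by simpa [ne_comm] using Finset.mem_compl.mp hj) h1 h2

lemma encInput_val {n d : ℕ} (D : Finset (Fin d → ℝ)) (z : GraphInput1 n d)
    (hmem : ∀ i, z.node i ∈ D) (hinj : Function.Injective z.node)
    {p q : Fin n} (hpq : p ≠ q) :
    encInput D z (enc (idxD D (z.node p)) (idxD D (z.node q)) 1) = z.edge p q := by
  rw [encInput_val_eq]
  have hidx : ∀ i j : Fin n, idxD D (z.node i) = idxD D (z.node j) → i = j := by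
    intro i j h
    exact hinj (idxD_inj D (hmem i) (hmem j) h)
  refine Eq.trans (Finset.sum_eq_single_of_mem p (Finset.mem_univ p) ?_) ?_
  · intro i _ hip
    apply Finset.sum_eq_zero
    intro j _
    apply if_neg
    rintro ⟨h1, -⟩
    exact hip (hidx i p h1)
  · refine Eq.trans (Finset.sum_eq_single_of_mem q (by simpa using hpq.symm) ?_) ?_
    · intro j _ hjq
      apply if_neg
      rintro ⟨-, h2⟩
      exact hjq (hidx j q h2)
    · simp

/-- Key lemma: a valid input's label at `k` is determined by its encoding
together with the node feature of `k`. -/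
lemma label_eq {n d : ℕ} {Y : Type*} (hn : 1 ≤ n)
    (D : Finset (Fin d → ℝ)) (F₀ : GraphInput1 n d → Fin n → Y)
    (hEdgeOnly : ∀ z z' : GraphInput1 n d,
      (∀ i : Fin n, z.node i ∈ D) → Function.Injective z.node →
      (∀ i : Fin n, z'.node i ∈ D) → Function.Injective z'.node →
      (∀ i j : Fin n, i ≠ j → z.edge i j = z'.edge i j) → F₀ z = F₀ z')
    (hGPI : ∀ (σ : Equiv.Perm (Fin n)) (z : GraphInput1 n d),
        (∀ i : Fin n, z.node i ∈ D) → Function.Injective z.node →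
        F₀ (z.perm σ) = fun k => F₀ z (σ k))
    {z z' : GraphInput1 n d}
    (hm : ∀ i, z.node i ∈ D) (hi : Function.Injective z.node)
    (hm' : ∀ i, z'.node i ∈ D) (hi' : Function.Injective z'.node)
    {k k' : Fin n} (hk : z.node k = z'.node k')
    (henc : encInput D z = encInput D z') :
    F₀ z k = F₀ z' k' := by
  by_cases h2 : 2 ≤ n
  · -- build the matching permutation
    have hex : ∀ i : Fin n, ∃ p : Fin n, z.node p = z'.node i := by
      intro i
      have : Nontrivial (Fin n) := Fin.nontrivial_iff_two_le.mpr h2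
      obtain ⟨j, hj⟩ := exists_ne i
      have h1 : encInput D z' (enc (idxD D (z'.node i)) (idxD D (z'.node j)) 0) ≠ 0 :=
        ind_pos D z' hj.symm
      rw [← henc] at h1
      obtain ⟨p, q, hpq, hp, hq⟩ := exists_of_ind_ne_zero D z h1
      exact ⟨p, idxD_inj D (hm p) (hm' i) hp⟩
    choose σ0 hσ0 using hex
    have hinj0 : Function.Injective σ0 := by
      intro i j h
      apply hi'
      rw [← hσ0 i, ← hσ0 j, h]
    have hbij : Function.Bijective σ0 := Finite.injective_iff_bijective.mp hinj0
    let σ : Equiv.Perm (Fin n) := Equiv.ofBijective σ0 hbij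
    have hσ : ∀ i, σ i = σ0 i := fun i => rfl
    have hedge : ∀ i j : Fin n, i ≠ j → z.edge (σ0 i) (σ0 j) = z'.edge i j := by
      intro i j hij
      have hσij : σ0 i ≠ σ0 j := fun h => hij (hinj0 h)
      have h1 := encInput_val D z hm hi hσij
      have h2 := encInput_val D z' hm' hi' hij
      rw [hσ0 i, hσ0 j, henc, h2] at h1
      exact h1.symm
    have hwmem : ∀ i, (z.perm σ).node i ∈ D := fun i => hm (σ i)
    have hwinj : Function.Injective (z.perm σ).node := by
      intro a b hab
      exact σ.injective (hi hab)
    have hw : F₀ (z.perm σ) = F₀ z' := by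
      apply hEdgeOnly _ _ hwmem hwinj hm' hi'
      intro i j hij
      exact hedge i j hij
    have hg := hGPI σ z hm hi
    have hσk : σ k' = k := by
      apply hi
      rw [hσ k', hσ0 k', ← hk]
    calc F₀ z k = F₀ z (σ k') := by rw [hσk]
      _ = F₀ (z.perm σ) k' := by rw [hg]
      _ = F₀ z' k' := by rw [hw]
  · -- n = 1
    have hn1 : n = 1 := by omega
    have hkk : k = k' := by
      apply Fin.ext
      omega
    have : F₀ z = F₀ z' := by
      apply hEdgeOnly z z' hm hi hm' hi'
      intro i j hij
      exact absurd (Fin.ext (by omega)) hij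
    rw [this, hkk]

end GPIAux

theorem gpi_iff_decomposition {n d : ℕ} {Y : Type*}
    (hn : 1 ≤ n) (hd : 1 ≤ d)
    (D : Finset (Fin d → ℝ))
    (F₀ : GraphInput1 n d → Fin n → Y)
    (hEdgeOnly : ∀ z z' : GraphInput1 n d,
      (∀ i : Fin n, z.node i ∈ D) → Function.Injective z.node →
      (∀ i : Fin n, z'.node i ∈ D) → Function.Injective z'.node →
      (∀ i j : Fin n, i ≠ j → z.edge i j = z'.edge i j) → F₀ z = F₀ z') :
    (∀ (σ : Equiv.Perm (Fin n)) (z : GraphInput1 n d),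
        (∀ i : Fin n, z.node i ∈ D) → Function.Injective z.node →
        F₀ (z.perm σ) = fun k => F₀ z (σ k))
      ↔
    (∃ (L W : ℕ)
        (φ : (Fin d → ℝ) → ℝ → (Fin d → ℝ) → (Fin L → ℝ))
        (α : (Fin d → ℝ) → (Fin L → ℝ) → (Fin W → ℝ))
        (ρ : (Fin d → ℝ) → (Fin W → ℝ) → Y),
        ∀ z : GraphInput1 n d,
          (∀ i : Fin n, z.node i ∈ D) → Function.Injective z.node →
          ∀ k : Fin n,
            F₀ z k = ρ (z.node k)
              (∑ i : Fin n, α (z.node i)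
                (∑ j ∈ ({i}ᶜ : Finset (Fin n)),
                  φ (z.node i) (z.edge i j) (z.node j)))) := by
  constructor
  · -- forward direction
    intro hGPI
    have y₀ : Y := F₀ ⟨fun _ _ => 0, fun _ _ => 0⟩ ⟨0, hn⟩
    classical
    refine ⟨(D.card + 1) * ((D.card + 1) * 2), (D.card + 1) * ((D.card + 1) * 2),
      GPIAux.φD D, fun _ v => v,
      fun x s => if h : ∃ p : GraphInput1 n d × Fin n,
          (∀ i, p.1.node i ∈ D) ∧ Function.Injective p.1.node ∧
          p.1.node p.2 = x ∧ GPIAux.encInput D p.1 = s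
        then F₀ h.choose.1 h.choose.2 else y₀, ?_⟩
    intro z hmem hinj k
    have hsum : (∑ i : Fin n, (fun (_ : Fin d → ℝ) (v : Fin ((D.card + 1) * ((D.card + 1) * 2)) → ℝ) => v) (z.node i)
        (∑ j ∈ ({i}ᶜ : Finset (Fin n)),
          GPIAux.φD D (z.node i) (z.edge i j) (z.node j))) = GPIAux.encInput D z := rfl
    rw [hsum]
    have hex : ∃ p : GraphInput1 n d × Fin n,
        (∀ i, p.1.node i ∈ D) ∧ Function.Injective p.1.node ∧
        p.1.node p.2 = z.node k ∧ GPIAux.encInput D p.1 = GPIAux.encInput D z :=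
      ⟨(z, k), hmem, hinj, rfl, rfl⟩
    refine Eq.trans ?_ (dif_pos hex).symm
    obtain ⟨hm', hi', hk', henc'⟩ := hex.choose_spec
    exact (GPIAux.label_eq hn D F₀ hEdgeOnly hGPI hm' hi' hmem hinj hk' henc').symm
  · -- reverse direction
    rintro ⟨L, W, φ, α, ρ, h⟩ σ z hmem hinj
    funext k
    have hmem' : ∀ i, (z.perm σ).node i ∈ D := fun i => hmem (σ i)
    have hinj' : Function.Injective (z.perm σ).node := by
      intro a b hab
      exact σ.injective (hinj hab)
    rw [h (z.perm σ) hmem' hinj' k]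
    show _ = F₀ z (σ k)
    rw [h z hmem hinj (σ k)]
    have hnodek : (z.perm σ).node k = z.node (σ k) := rfl
    rw [hnodek]
    congr 1
    have hinner : ∀ i : Fin n,
        (∑ j ∈ ({i}ᶜ : Finset (Fin n)),
          φ (z.node (σ i)) (z.edge (σ i) (σ j)) (z.node (σ j))) =
        ∑ j ∈ ({σ i}ᶜ : Finset (Fin n)),
          φ (z.node (σ i)) (z.edge (σ i) j) (z.node j) := by
      intro i
      apply Finset.sum_equiv σ
      · intro j
        simp [σ.injective.eq_iff]
      · intro j _
        rfl
    rw [← Equiv.sum_comp σ (fun i => α (z.node i)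
      (∑ j ∈ ({i}ᶜ : Finset (Fin n)), φ (z.node i) (z.edge i j) (z.node j)))]
    apply Finset.sum_congr rfl
    intro i _
    show α (z.node (σ i))
        (∑ j ∈ ({i}ᶜ : Finset (Fin n)),
          φ (z.node (σ i)) (z.edge (σ i) (σ j)) (z.node (σ j))) =
      α (z.node (σ i))
        (∑ j ∈ ({σ i}ᶜ : Finset (Fin n)),
          φ (z.node (σ i)) (z.edge (σ i) j) (z.node j))
    exact congrArg _ (hinner i)
end

section
/- Let n ≥ 2, let β : ℝ^d × ℝ^e × ℝ^d → ℝ, a : ℝ^d × ℝ^e → ℝ^W, and ρ : ℝ^d × ℝ^W → Y be any functions, and define attention weights w_{i,j}(z) = exp(β(z_i, z_{i,j}, z_j)) / Σ_{t≠i} exp(β(z_i, z_{i,t}, z_t)). Then the attention-based graph labeling function [F(z)]_k = ρ(z_k, Σ_{i=1}^n a(z_i, Σ_{j≠i} w_{i,j}(z) · z_{i,j})) is graph-permutation invariant. -/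
lemma sum_compl_perm {n : ℕ} {M : Type*} [AddCommMonoid M] (σ : Equiv.Perm (Fin n))
    (i : Fin n) (f : Fin n → M) :
    ∑ j ∈ ({i}ᶜ : Finset (Fin n)), f (σ j) = ∑ j ∈ ({σ i}ᶜ : Finset (Fin n)), f j := by
  refine Finset.sum_equiv σ (fun j => ?_) (fun j _ => rfl)
  simp [σ.injective.eq_iff]

/-- The attention-based graph labeling function
`[F(z)]_k = ρ(z_k, Σ_i a(z_i, Σ_{j≠i} w_{i,j}(z)·z_{i,j}))`, with softmax attention
weights `w_{i,j}(z) = exp(β(z_i,z_{i,j},z_j)) / Σ_{t≠i} exp(β(z_i,z_{i,t},z_t))`,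
is graph-permutation invariant. -/
theorem attention_model_gpi {n d e W : ℕ} {Y : Type*}
    (hn : 2 ≤ n) (hd : 1 ≤ d) (he : 1 ≤ e)
    (β : (Fin d → ℝ) → (Fin e → ℝ) → (Fin d → ℝ) → ℝ)
    (a : (Fin d → ℝ) → (Fin e → ℝ) → (Fin W → ℝ))
    (ρ : (Fin d → ℝ) → (Fin W → ℝ) → Y)
    (F : GraphInput n d e → Fin n → Y)
    (hF : ∀ (z : GraphInput n d e) (k : Fin n),
      F z k = ρ (z.node k)
        (∑ i : Fin n, a (z.node i)
          (∑ j ∈ ({i}ᶜ : Finset (Fin n)),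
            (Real.exp (β (z.node i) (z.edge i j) (z.node j)) /
              ∑ t ∈ ({i}ᶜ : Finset (Fin n)),
                Real.exp (β (z.node i) (z.edge i t) (z.node t))) • z.edge i j))) :
    IsGPI F := by
  intro σ z
  funext k
  rw [hF, hF]
  simp only [GraphInput.perm]
  congr 1
  refine Fintype.sum_equiv σ
    (fun i => a (z.node (σ i))
      (∑ j ∈ ({i}ᶜ : Finset (Fin n)),
        (Real.exp (β (z.node (σ i)) (z.edge (σ i) (σ j)) (z.node (σ j))) /
          ∑ t ∈ ({i}ᶜ : Finset (Fin n)),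
            Real.exp (β (z.node (σ i)) (z.edge (σ i) (σ t)) (z.node (σ t)))) •
          z.edge (σ i) (σ j)))
    (fun i => a (z.node i)
      (∑ j ∈ ({i}ᶜ : Finset (Fin n)),
        (Real.exp (β (z.node i) (z.edge i j) (z.node j)) /
          ∑ t ∈ ({i}ᶜ : Finset (Fin n)),
            Real.exp (β (z.node i) (z.edge i t) (z.node t))) • z.edge i j))
    fun i => ?_
  congr 1
  rw [← sum_compl_perm σ i fun j =>
    (Real.exp (β (z.node (σ i)) (z.edge (σ i) j) (z.node j)) /
      ∑ t ∈ ({σ i}ᶜ : Finset (Fin n)),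
        Real.exp (β (z.node (σ i)) (z.edge (σ i) t) (z.node t))) • z.edge (σ i) j]
  rw [sum_compl_perm σ i fun t =>
    Real.exp (β (z.node (σ i)) (z.edge (σ i) t) (z.node t))]
end

section
/- Let H : ℝ^d → {1,…,L} be a function and let z be an input with scalar edge features z_{i,j} ∈ ℝ such that H is injective on the set of node features {z_1, …, z_n}. Define φ(z_i, z_{i,j}, z_j) = z_{i,j} · 1_{H(z_j)} ∈ ℝ^L, where 1_r denotes the r-th standard basis vector of ℝ^L, and set s_i = Σ_{j≠i} φ(z_i, z_{i,j}, z_j). Then for every pair i ≠ k, the H(z_k)-th coordinate of s_i equals z_{i,k}. -/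
/-- The one-hot vector in `ℝ^L` with a `1` in coordinate `r` and `0` elsewhere. -/
def oneHot {L : ℕ} (r : Fin L) : Fin L → ℝ :=
  fun m => if m = r then 1 else 0

/-- Let `H : ℝ^d → {1,…,L}` be injective on the node features
`z_1, …, z_n` (the features identify the nodes).  With
`φ(z_i, z_{i,j}, z_j) = z_{i,j} · 1_{H(z_j)}` and `s_i = Σ_{j≠i} φ(z_i,z_{i,j},z_j)`,
for every pair `i ≠ k` the `H(z_k)`-th coordinate of `s_i` equals `z_{i,k}`. -/
theorem hash_stores_edge_features {n d L : ℕ}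
    (hn : 1 ≤ n) (hd : 1 ≤ d) (hL : 1 ≤ L)
    (H : (Fin d → ℝ) → Fin L)
    (z : GraphInput1 n d)
    (hinj : Function.Injective (fun i : Fin n => H (z.node i)))
    (φ : (Fin d → ℝ) → ℝ → (Fin d → ℝ) → (Fin L → ℝ))
    (hφ : ∀ zi zij zj, φ zi zij zj = zij • oneHot (H zj))
    (s : Fin n → (Fin L → ℝ))
    (hs : ∀ i : Fin n,
      s i = ∑ j ∈ ({i}ᶜ : Finset (Fin n)), φ (z.node i) (z.edge i j) (z.node j))
    (i k : Fin n) (hik : i ≠ k) :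
    s i (H (z.node k)) = z.edge i k := by
  rw [hs]
  simp only [Finset.sum_apply, hφ, Pi.smul_apply, oneHot, smul_eq_mul]
  rw [Finset.sum_eq_single k]
  · simp
  · intro j hj hjk
    have : H (z.node j) ≠ H (z.node k) := fun h => hjk (hinj h)
    simp [Ne.symm this]
  · intro h
    simp only [Finset.mem_compl, Finset.mem_singleton, not_not] at h
    exact absurd h.symm hik
end

section
/- Let H : ℝ^d → {1,…,L} be a function and let z be an input with scalar edge features z_{i,j} ∈ ℝ such that H is injective on the set of node features {z_1, …, z_n}. Define φ(z_i, z_{i,j}, z_j) = z_{i,j} · 1_{H(z_j)} ∈ ℝ^L, s_i = Σ_{j≠i} φ(z_i, z_{i,j}, z_j), α(z_i, s_i) = 1_{H(z_i)} s_i^T ∈ ℝ^{L×L} (the outer product, a matrix that is zero except for row H(z_i), which equals s_i), and M = Σ_{i=1}^n α(z_i, s_i). Then for every pair i ≠ j, the entry of M in row H(z_i) and column H(z_j) equals z_{i,j}. -/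
/-- Let `H : ℝ^d → {1,…,L}` be injective on the node features
`z_1, …, z_n` (the features identify the nodes).  With
`φ(z_i, z_{i,j}, z_j) = z_{i,j} · 1_{H(z_j)}`, `s_i = Σ_{j≠i} φ(z_i,z_{i,j},z_j)`,
`α(z_i, s_i) = 1_{H(z_i)} s_iᵀ` (outer product) and `M = Σ_i α(z_i, s_i)`, the
entry of `M` in row `H(z_i)` and column `H(z_j)` equals `z_{i,j}` for all `i ≠ j`. -/
theorem hash_matrix_stores_graph {n d L : ℕ}
    (hn : 1 ≤ n) (hd : 1 ≤ d) (hL : 1 ≤ L)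
    (H : (Fin d → ℝ) → Fin L)
    (z : GraphInput1 n d)
    (hinj : Function.Injective (fun i : Fin n => H (z.node i)))
    (φ : (Fin d → ℝ) → ℝ → (Fin d → ℝ) → (Fin L → ℝ))
    (hφ : ∀ zi zij zj, φ zi zij zj = zij • oneHot (H zj))
    (s : Fin n → (Fin L → ℝ))
    (hs : ∀ i : Fin n,
      s i = ∑ j ∈ ({i}ᶜ : Finset (Fin n)), φ (z.node i) (z.edge i j) (z.node j))
    (α : Fin n → Matrix (Fin L) (Fin L) ℝ)
    (hα : ∀ i : Fin n, α i = Matrix.vecMulVec (oneHot (H (z.node i))) (s i))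
    (M : Matrix (Fin L) (Fin L) ℝ)
    (hM : M = ∑ i : Fin n, α i)
    (i j : Fin n) (hij : i ≠ j) :
    M (H (z.node i)) (H (z.node j)) = z.edge i j := by
  subst hM
  simp only [Matrix.sum_apply, hα, Matrix.vecMulVec_apply]
  rw [Finset.sum_eq_single i]
  · rw [hs, show (∑ k ∈ ({i}ᶜ : Finset (Fin n)),
        φ (z.node i) (z.edge i k) (z.node k)) (H (z.node j))
        = ∑ k ∈ ({i}ᶜ : Finset (Fin n)),
        (φ (z.node i) (z.edge i k) (z.node k)) (H (z.node j)) from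
        Finset.sum_apply _ _ _]
    simp only [hφ, Pi.smul_apply, oneHot, smul_eq_mul]
    rw [Finset.sum_eq_single j]
    · simp [oneHot]
    · intro k hk hkj
      have : H (z.node k) ≠ H (z.node j) := fun h => hkj (hinj h)
      simp [this.symm, oneHot]
    · intro h
      exact absurd (Finset.mem_compl.mpr (by simpa using hij.symm)) h
  · intro k _ hk
    have : H (z.node k) ≠ H (z.node i) := fun h => hk (hinj h)
    simp [oneHot, this.symm]
  · simp
end
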